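/- Let D be a G-admissible divisor of degree d on a metric graph Γ. A polarization q ∈ ℝ^V with q(V)=d satisfies |deg(D_I) − q(I)| ≤ e(I,I^c)/2 for all nonempty proper I ⊂ V if and only if |q(I) − q_D(I)| ≤ e_D(I,I^c)/2 for all I ⊆ V, where q_D(I) := deg(D_I) + δ_D(I,I^c)/2, e_D(I,I^c) is the number of crossing edges of G_D, and δ_D(I,I^c) = e(I,I^c) − e_D(I,I^c). -/
import Mathlib


/-- A model `(G, ℓ)` of a metric graph `Γ`: a finite (multi)graph `G = (V, E)` given by
its endpoint maps `src, tgt : E → V`, together with positive edge lengths `ℓ : E → ℝ`.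
The metric graph `Γ` is obtained by plugging an interval `[0, ℓ e]` between the two
extremities of each edge `e`; a point of `Γ` is either a vertex or an interior point of
an edge `e`, recorded by its parameter `t ∈ (0, ℓ e)`. -/
structure MetricGraph where
  V : Type
  E : Type
  fintypeV : Fintype V
  decEqV : DecidableEq V
  fintypeE : Fintype E
  src : E → V
  tgt : E → V
  len : E → ℝ
  len_pos : ∀ e, 0 < len e

attribute [instance] MetricGraph.fintypeV MetricGraph.decEqV MetricGraph.fintypeE

/-- A divisor on the metric graph `Γ`: an integer coefficient `vtx v` at each vertex `v`,
and an integer coefficient `inter e t` at the interior point of edge `e` with parameter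
`t`; the interior coefficients are supported on finitely many points, all lying in the
open interval `(0, ℓ e)`. -/
structure Divisor (Γ : MetricGraph) where
  vtx : Γ.V → ℤ
  inter : Γ.E → ℝ → ℤ
  finite_supp : ∀ e, {t : ℝ | inter e t ≠ 0}.Finite
  supp_mem : ∀ e t, inter e t ≠ 0 → t ∈ Set.Ioo 0 (Γ.len e)

/-- A divisor `D` is `G`-admissible if each edge interior contains at most one point of
its support, and the coefficient of `D` there equals `1`. -/
def Divisor.GAdmissible {Γ : MetricGraph} (D : Divisor Γ) : Prop :=
  ∀ e t₁ t₂, D.inter e t₁ ≠ 0 → D.inter e t₂ ≠ 0 → t₁ = t₂ ∧ D.inter e t₁ = 1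

/-- The total interior degree of `D` on the edge `e`. -/
noncomputable def Divisor.interDeg {Γ : MetricGraph} (D : Divisor Γ) (e : Γ.E) : ℤ :=
  ∑ᶠ t : ℝ, D.inter e t

/-- The degree of the divisor `D`. -/
noncomputable def Divisor.deg {Γ : MetricGraph} (D : Divisor Γ) : ℤ :=
  (∑ v, D.vtx v) + ∑ e, D.interDeg e

open Finset in
/-- `deg(D_I)`: the degree of the restriction of `D` to `Γ_I`, the union of the vertices
in `I` and the edges joining two vertices of `I`. -/
noncomputable def Divisor.degRestr {Γ : MetricGraph} (D : Divisor Γ) (I : Finset Γ.V) : ℤ :=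
  (∑ v ∈ I, D.vtx v) +
    ∑ e ∈ Finset.univ.filter (fun e => Γ.src e ∈ I ∧ Γ.tgt e ∈ I), D.interDeg e

/-- `e(I, I^c)`: the number of edges of `G` between `I` and its complement. -/
noncomputable def crossE (Γ : MetricGraph) (I : Finset Γ.V) : ℕ :=
  {e : Γ.E | ¬((Γ.src e ∈ I) ↔ (Γ.tgt e ∈ I))}.ncard

/-- `e_D(I, I^c)`: the number of edges of the spanning subgraph `G_D` (edges with no
point of the support of `D` in their interior) between `I` and its complement. -/
noncomputable def crossED {Γ : MetricGraph} (D : Divisor Γ) (I : Finset Γ.V) : ℕ :=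
  {e : Γ.E | (¬((Γ.src e ∈ I) ↔ (Γ.tgt e ∈ I))) ∧ ∀ t, D.inter e t = 0}.ncard

/-- `q_D(I) = deg(D_I) + δ_D(I, I^c)/2`, where `δ_D(I, I^c) = e(I, I^c) - e_D(I, I^c)`. -/
noncomputable def qD {Γ : MetricGraph} (D : Divisor Γ) (I : Finset Γ.V) : ℝ :=
  (D.degRestr I : ℝ) + ((crossE Γ I : ℝ) - (crossED D I : ℝ)) / 2

open scoped Classical

private lemma interDeg_cases {Γ : MetricGraph} (D : Divisor Γ) (hD : D.GAdmissible) (e : Γ.E) :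
    D.interDeg e = if ∀ t, D.inter e t = 0 then 0 else 1 := by
  split_ifs with h
  · simp [Divisor.interDeg, h]
  · push_neg at h
    obtain ⟨t₀, ht₀⟩ := h
    rw [Divisor.interDeg, finsum_eq_single _ t₀ (fun b hb => by
      by_contra hb'
      exact hb (hD e b t₀ hb' ht₀).1)]
    exact (hD e t₀ t₀ ht₀ ht₀).2

private lemma crossE_card (Γ : MetricGraph) (I : Finset Γ.V) :
    crossE Γ I =
      (Finset.univ.filter (fun e => ¬((Γ.src e ∈ I) ↔ (Γ.tgt e ∈ I)))).card := by
  rw [crossE, Set.ncard_eq_toFinset_card']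
  congr 1
  ext e
  simp

private lemma crossED_card {Γ : MetricGraph} (D : Divisor Γ) (I : Finset Γ.V) :
    crossED D I =
      (Finset.univ.filter (fun e => (¬((Γ.src e ∈ I) ↔ (Γ.tgt e ∈ I))) ∧
        ∀ t, D.inter e t = 0)).card := by
  rw [crossED, Set.ncard_eq_toFinset_card']
  congr 1
  ext e
  simp

private lemma crossED_le_crossE {Γ : MetricGraph} (D : Divisor Γ) (I : Finset Γ.V) :
    crossED D I ≤ crossE Γ I := by
  rw [crossE_card, crossED_card]
  apply Finset.card_le_card
  intro e
  simp only [Finset.mem_filter]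
  tauto

private lemma crossE_compl (Γ : MetricGraph) (I : Finset Γ.V) :
    crossE Γ Iᶜ = crossE Γ I := by
  unfold crossE
  congr 1
  ext e
  simp only [Set.mem_setOf_eq, Finset.mem_compl]
  tauto

open Finset in
/-- Degree decomposition: `deg(D_I) + deg(D_{I^c}) + δ_D(I,I^c) = deg D`. -/
private lemma deg_decomp {Γ : MetricGraph} (D : Divisor Γ) (hD : D.GAdmissible)
    (I : Finset Γ.V) :
    D.degRestr I + D.degRestr Iᶜ + ((crossE Γ I : ℤ) - (crossED D I : ℤ)) = D.deg := by
  unfold Divisor.degRestr Divisor.deg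
  have hv : (∑ v ∈ I, D.vtx v) + ∑ v ∈ Iᶜ, D.vtx v = ∑ v, D.vtx v :=
    Finset.sum_add_sum_compl I _
  have hsplit : (∑ e ∈ univ.filter (fun e => Γ.src e ∈ I ∧ Γ.tgt e ∈ I), D.interDeg e)
      + (∑ e ∈ univ.filter (fun e => Γ.src e ∈ Iᶜ ∧ Γ.tgt e ∈ Iᶜ), D.interDeg e)
      + (∑ e ∈ univ.filter (fun e => ¬((Γ.src e ∈ I) ↔ (Γ.tgt e ∈ I))), D.interDeg e)
      = ∑ e, D.interDeg e := by
    have h1 : (∑ e ∈ univ.filter (fun e => Γ.src e ∈ I ∧ Γ.tgt e ∈ I), D.interDeg e)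
        + (∑ e ∈ univ.filter (fun e => ¬ (Γ.src e ∈ I ∧ Γ.tgt e ∈ I)), D.interDeg e)
        = ∑ e, D.interDeg e :=
      Finset.sum_filter_add_sum_filter_not _ _ _
    have h4 : (∑ e ∈ (univ.filter (fun e => ¬ (Γ.src e ∈ I ∧ Γ.tgt e ∈ I))).filter
          (fun e => Γ.src e ∈ Iᶜ ∧ Γ.tgt e ∈ Iᶜ), D.interDeg e)
        + (∑ e ∈ (univ.filter (fun e => ¬ (Γ.src e ∈ I ∧ Γ.tgt e ∈ I))).filter
          (fun e => ¬ (Γ.src e ∈ Iᶜ ∧ Γ.tgt e ∈ Iᶜ)), D.interDeg e)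
        = ∑ e ∈ univ.filter (fun e => ¬ (Γ.src e ∈ I ∧ Γ.tgt e ∈ I)), D.interDeg e :=
      Finset.sum_filter_add_sum_filter_not _ _ _
    have h2 : ((univ.filter (fun e => ¬ (Γ.src e ∈ I ∧ Γ.tgt e ∈ I))).filter
          (fun e => Γ.src e ∈ Iᶜ ∧ Γ.tgt e ∈ Iᶜ))
        = univ.filter (fun e => Γ.src e ∈ Iᶜ ∧ Γ.tgt e ∈ Iᶜ) := by
      ext e
      simp only [Finset.mem_filter, Finset.mem_univ, true_and, Finset.mem_compl]
      tauto
    have h3 : ((univ.filter (fun e => ¬ (Γ.src e ∈ I ∧ Γ.tgt e ∈ I))).filter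
          (fun e => ¬ (Γ.src e ∈ Iᶜ ∧ Γ.tgt e ∈ Iᶜ)))
        = univ.filter (fun e => ¬((Γ.src e ∈ I) ↔ (Γ.tgt e ∈ I))) := by
      ext e
      simp only [Finset.mem_filter, Finset.mem_univ, true_and, Finset.mem_compl]
      tauto
    rw [h2, h3] at h4
    omega
  have hX : (∑ e ∈ univ.filter (fun e => ¬((Γ.src e ∈ I) ↔ (Γ.tgt e ∈ I))), D.interDeg e)
      = (crossE Γ I : ℤ) - (crossED D I : ℤ) := by
    have hcong : ∀ e ∈ univ.filter (fun e => ¬((Γ.src e ∈ I) ↔ (Γ.tgt e ∈ I))),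
        D.interDeg e = if ∀ t, D.inter e t = 0 then 0 else 1 :=
      fun e _ => interDeg_cases D hD e
    rw [Finset.sum_congr rfl hcong, Finset.sum_ite, Finset.sum_const, Finset.sum_const]
    have hcE : (univ.filter (fun e => ¬((Γ.src e ∈ I) ↔ (Γ.tgt e ∈ I)))).card
        = crossE Γ I := (crossE_card Γ I).symm
    have hcED : ((univ.filter (fun e => ¬((Γ.src e ∈ I) ↔ (Γ.tgt e ∈ I)))).filter
          (fun e => ∀ t, D.inter e t = 0)).card = crossED D I := by
      rw [crossED_card, Finset.filter_filter]
    have hsub : ((univ.filter (fun e => ¬((Γ.src e ∈ I) ↔ (Γ.tgt e ∈ I)))).filter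
          (fun e => ∀ t, D.inter e t = 0)).card
        + ((univ.filter (fun e => ¬((Γ.src e ∈ I) ↔ (Γ.tgt e ∈ I)))).filter
          (fun e => ¬ ∀ t, D.inter e t = 0)).card
        = (univ.filter (fun e => ¬((Γ.src e ∈ I) ↔ (Γ.tgt e ∈ I)))).card :=
      Finset.card_filter_add_card_filter_not _
    simp only [smul_zero, nsmul_eq_mul, mul_one, zero_add]
    omega
  omega

/-- For a `G`-admissible divisor `D` of degree `d` and a polarization `q ∈ ℝ^V` with
`q(V) = d`: `|deg(D_I) - q(I)| ≤ e(I, I^c)/2` for all nonempty proper `I ⊂ V` if and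
only if `|q(I) - q_D(I)| ≤ e_D(I, I^c)/2` for all `I ⊆ V`. -/

theorem semistability_iff_centered
    (Γ : MetricGraph) (D : Divisor Γ) (hD : D.GAdmissible)
    (d : ℤ) (hd : D.deg = d)
    (q : Γ.V → ℝ) (hq : ∑ v, q v = (d : ℝ)) :
    (∀ I : Finset Γ.V, I.Nonempty → I ≠ Finset.univ →
        |(D.degRestr I : ℝ) - ∑ v ∈ I, q v| ≤ (crossE Γ I : ℝ) / 2) ↔
    (∀ I : Finset Γ.V,
        |(∑ v ∈ I, q v) - qD D I| ≤ (crossED D I : ℝ) / 2) := by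
  classical
  have hdelta : ∀ I : Finset Γ.V, (crossED D I : ℝ) ≤ (crossE Γ I : ℝ) := by
    intro I; exact_mod_cast crossED_le_crossE D I
  constructor
  · intro h I
    by_cases hI0 : I = ∅
    · subst hI0
      have h1 : D.degRestr (∅ : Finset Γ.V) = 0 := by
        simp [Divisor.degRestr]
      have h2 : crossE Γ (∅ : Finset Γ.V) = 0 := by
        rw [crossE_card]; simp
      have h3 : crossED D (∅ : Finset Γ.V) = 0 := by
        rw [crossED_card]
        rw [Finset.card_eq_zero]
        ext e
        simp
      simp [qD, h1, h2, h3]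
    · by_cases hI1 : I = Finset.univ
      · subst hI1
        have h2 : crossE Γ (Finset.univ : Finset Γ.V) = 0 := by
          rw [crossE_card]; simp
        have h3 : crossED D (Finset.univ : Finset Γ.V) = 0 := by
          rw [crossED_card]
          rw [Finset.card_eq_zero]
          ext e
          simp
        have h1 : D.degRestr (Finset.univ : Finset Γ.V) = d := by
          rw [← hd]
          unfold Divisor.degRestr Divisor.deg
          congr 1
          apply Finset.sum_congr _ (fun _ _ => rfl)
          ext e; simp
        simp only [qD, h1, h2, h3, Nat.cast_zero, zero_sub, neg_zero, zero_div,
          add_zero, zero_add, hq]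
        simp
      · have hne : I.Nonempty := Finset.nonempty_iff_ne_empty.mpr hI0
        have hcne : Iᶜ.Nonempty := by
          rw [Finset.nonempty_iff_ne_empty]
          simpa [Finset.compl_eq_empty_iff] using hI1
        have hcnu : Iᶜ ≠ Finset.univ := by
          intro hc
          exact hI0 (by simpa using congrArg compl hc)
        have hA := h I hne hI1
        have hB := h Iᶜ hcne hcnu
        have hdec := deg_decomp D hD I
        rw [hd] at hdec
        have hdecR : (D.degRestr I : ℝ) + (D.degRestr Iᶜ : ℝ)
            + ((crossE Γ I : ℝ) - (crossED D I : ℝ)) = (d : ℝ) := by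
          exact_mod_cast hdec
        have hqc : (∑ v ∈ I, q v) + (∑ v ∈ Iᶜ, q v) = (d : ℝ) := by
          rw [Finset.sum_add_sum_compl, hq]
        rw [crossE_compl] at hB
        rw [abs_le] at hA hB ⊢
        rw [qD]
        have hd0 : (0 : ℝ) ≤ (crossE Γ I : ℝ) - (crossED D I : ℝ) := by
          linarith [hdelta I]
        constructor <;> [skip; skip] <;>
          · obtain ⟨hA1, hA2⟩ := hA
            obtain ⟨hB1, hB2⟩ := hB
            linarith
  · intro h I hne hI1
    have hR := h I
    rw [abs_le] at hR ⊢
    rw [qD] at hR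
    have hd0 : (0 : ℝ) ≤ (crossE Γ I : ℝ) - (crossED D I : ℝ) := by
      linarith [hdelta I]
    obtain ⟨h1, h2⟩ := hR
    constructor <;> linarith
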